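/- Let T be a triangulated category, X a full subcategory closed under extensions and direct summands, and let ξ : x → u be an X-envelope of an object x (a left minimal X-preenvelope). Complete ξ to a distinguished triangle y → x → u → Σy. Then Hom_T(y, w) = 0 for every w ∈ X. -/

import Mathlib

/-!
Push the triangle along `f : y ⟶ w`: the cone `w → e → u` of `h ≫ f⟦1⟧'` is an extension of
`u` by `w`, hence lies in `X`, and the morphism of triangles `(f, b, 𝟙 u)` gives `b ≫ p = ξ`.
Factoring `b` through the preenvelope `ξ` and using left minimality shows that `p` is a split
epimorphism, so the connecting morphism `h ≫ f⟦1⟧'` vanishes and `i : w ⟶ e` is a monomorphism.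
Finally `f ≫ i = α ≫ b` factors through `α ≫ ξ = 0`, so `f = 0`.
-/

open CategoryTheory Limits Pretriangulated

namespace CategoryTheory

variable {C : Type*} [Category C]

def IsLeftMinimal {x u : C} (ξ : x ⟶ u) : Prop :=
  ∀ φ : u ⟶ u, ξ ≫ φ = ξ → IsIso φ

lemma IsLeftMinimal.isSplitEpi {x u e : C} {ξ : x ⟶ u} (hξ : IsLeftMinimal ξ)
    {γ : u ⟶ e} {p : e ⟶ u} (h : ξ ≫ γ ≫ p = ξ) : IsSplitEpi p :=
  have := hξ _ h
  IsSplitEpi.mk' ⟨inv (γ ≫ p) ≫ γ, by simp⟩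

end CategoryTheory

/-- Let `T` be a triangulated category and `X` a full subcategory closed under
extensions and direct summands. If `ξ : x → u` is an `X`-envelope (a left minimal
`X`-preenvelope), completed to a distinguished triangle `y → x → u → Σy`, then
`Hom(y, w) = 0` for every `w ∈ X`. -/
theorem envelope_cone_hom_zero
    {T : Type*} [Category T] [Preadditive T] [HasZeroObject T] [HasShift T ℤ]
    [∀ n : ℤ, (CategoryTheory.shiftFunctor T n).Additive] [Pretriangulated T]
    (X : Set T)
    -- `X` is closed under extensions:
    (hext : ∀ (a b c : T) (f : a ⟶ b) (g : b ⟶ c) (h : c ⟶ a⟦(1 : ℤ)⟧),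
      Triangle.mk f g h ∈ (distTriang T) → a ∈ X → c ∈ X → b ∈ X)
    -- `X` is closed under direct summands (retracts):
    (hsum : ∀ (a u : T), u ∈ X → (∃ (s : a ⟶ u) (r : u ⟶ a), s ≫ r = 𝟙 a) → a ∈ X)
    (x u : T) (hu : u ∈ X) (ξ : x ⟶ u)
    -- `ξ` is an `X`-preenvelope:
    (hpre : ∀ w ∈ X, ∀ f : x ⟶ w, ∃ g : u ⟶ w, ξ ≫ g = f)
    -- `ξ` is left minimal:
    (hmin : ∀ φ : u ⟶ u, ξ ≫ φ = ξ → IsIso φ)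
    -- a distinguished triangle `y → x → u → Σy` completing `ξ`:
    (y : T) (α : y ⟶ x) (h : u ⟶ y⟦(1 : ℤ)⟧)
    (hT : Triangle.mk α ξ h ∈ distTriang T) :
    ∀ w ∈ X, ∀ f : y ⟶ w, f = 0 := by
  intro w hw f
  obtain ⟨e, i, p, hT₂⟩ := distinguished_cocone_triangle₂ (h ≫ f⟦(1 : ℤ)⟧')
  obtain ⟨b, hαb, hbp⟩ : ∃ b : x ⟶ e, α ≫ b = f ≫ i ∧ ξ ≫ 𝟙 u = b ≫ p :=
    complete_distinguished_triangle_morphism₂ _ _ hT hT₂ f (𝟙 u) (Category.id_comp _).symm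
  obtain ⟨γ, hγ⟩ := hpre e (hext w e u i p _ hT₂ hw hu) b
  have : IsSplitEpi p := IsLeftMinimal.isSplitEpi hmin (γ := γ) (by
    rw [← Category.assoc, hγ, ← hbp, Category.comp_id])
  have hδ : h ≫ f⟦(1 : ℤ)⟧' = 0 := Triangle.mor₃_eq_zero_of_epi₂ _ hT₂ (inferInstanceAs (Epi p))
  have : Mono i := Triangle.mono₁ _ hT₂ hδ
  have hαξ : α ≫ ξ = 0 := comp_distTriang_mor_zero₁₂ _ hT
  rw [← cancel_mono i, zero_comp, ← hαb, ← hγ, reassoc_of% hαξ, zero_comp]
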